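/- Let K be a Henselian discrete valuation field of characteristic p > 0. Then for every m ≥ 1 and n ≥ 0, the subgroup fil_n H¹_ét(K, ℤ/p^m) equals the intersection H¹_ét(K, ℤ/p^m) ∩ fil_n H¹_ét(K, ℚ_p/ℤ_p), and also equals the p^m-torsion subgroup of fil_n H¹_ét(K, ℚ_p/ℤ_p). -/

import Mathlib

open Multiplicative

/-! Artin–Schreier–Witt model of `H¹_ét(K, ℤ/p^m)` and `H¹_ét(K, ℚ_p/ℤ_p)` for a field `K`
of characteristic `p`: `H¹_ét(K, ℤ/p^m) ≅ W_m(K)/(1-F̄) ≅ W(K)/((1-F̄)W(K) + V^m W(K))`,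
and `H¹_ét(K, ℚ_p/ℤ_p)` is the direct limit of these along the maps induced by the
Verschiebung (corresponding to `ℤ/p^m ↪ ℤ/p^{m'}`).  Kato's filtration `fil_n` is the
image of `fil_n W_m(K) = {(a_{m-1},…,a_0) : p^i v_K(a_i) ≥ -n}`. -/

variable (p : ℕ) [hp : Fact p.Prime] (K : Type*) [CommRing K] [CharP K p]

/-- The additive endomorphism `1 - F̄` of `W(K)`, where `F̄` raises every component to the
`p`-th power. -/
noncomputable def oneSubF : WittVector p K →+ WittVector p K :=
  AddMonoidHom.id (WittVector p K) - (WittVector.map (frobenius K p)).toAddMonoidHom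

/-- Iterated Verschiebung `V^k` on `W(K)`. -/
noncomputable def Vpow : ℕ → (WittVector p K →+ WittVector p K)
  | 0 => AddMonoidHom.id _
  | k + 1 => (WittVector.verschiebung).comp (Vpow k)

lemma oneSubF_apply (x : WittVector p K) :
    oneSubF p K x = x - WittVector.map (frobenius K p) x := rfl

lemma Vpow_Vpow (a b : ℕ) (x : WittVector p K) :
    Vpow p K a (Vpow p K b x) = Vpow p K (a + b) x := by
  induction a with
  | zero => rw [Nat.zero_add]; rfl
  | succ a ih =>
      rw [Nat.succ_add]
      show WittVector.verschiebung (Vpow p K a (Vpow p K b x)) =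
        WittVector.verschiebung (Vpow p K (a + b) x)
      rw [ih]

lemma Vpow_oneSubF (k : ℕ) (x : WittVector p K) :
    Vpow p K k (oneSubF p K x) = oneSubF p K (Vpow p K k x) := by
  induction k with
  | zero => rfl
  | succ k ih =>
      show WittVector.verschiebung (Vpow p K k (oneSubF p K x)) =
        oneSubF p K (WittVector.verschiebung (Vpow p K k x))
      rw [ih]
      rw [oneSubF_apply, oneSubF_apply, map_sub, WittVector.map_verschiebung]

/-- The subgroup `(1-F̄)W(K) + V^m W(K)` of `W(K)`, so that
`Q_m := W(K)/S_m ≅ W_m(K)/(1-F̄) ≅ H¹_ét(Spec K, ℤ/p^m)`. -/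
noncomputable def Sgrp (m : ℕ) : AddSubgroup (WittVector p K) :=
  (oneSubF p K).range ⊔ (Vpow p K m).range

/-- `Q_m = W(K)/((1-F̄)W(K) + V^m W(K))`, the Artin–Schreier–Witt model of
`H¹_ét(Spec K, ℤ/p^m)`. -/
noncomputable def Qgrp (m : ℕ) : Type _ := WittVector p K ⧸ Sgrp p K m

noncomputable instance (m : ℕ) : AddCommGroup (Qgrp p K m) :=
  inferInstanceAs (AddCommGroup (WittVector p K ⧸ Sgrp p K m))

lemma Sgrp_le_comap (m k : ℕ) :
    Sgrp p K m ≤ (Sgrp p K (k + m)).comap (Vpow p K k) := by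
  show (oneSubF p K).range ⊔ (Vpow p K m).range ≤ _
  refine sup_le ?_ ?_
  · rintro x hx
    obtain ⟨y, rfl⟩ := hx
    refine AddSubgroup.mem_comap.2 ?_
    show Vpow p K k (oneSubF p K y) ∈ (oneSubF p K).range ⊔ (Vpow p K (k + m)).range
    exact AddSubgroup.mem_sup_left ⟨Vpow p K k y, (Vpow_oneSubF p K k y).symm⟩
  · rintro x hx
    obtain ⟨y, rfl⟩ := hx
    refine AddSubgroup.mem_comap.2 ?_
    show Vpow p K k (Vpow p K m y) ∈ (oneSubF p K).range ⊔ (Vpow p K (k + m)).range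
    exact AddSubgroup.mem_sup_right ⟨y, (Vpow_Vpow p K k m y).symm⟩

/-- The transition map `Q_m → Q_{m'}` (for `m ≤ m'`) induced by `V^{m'-m}`; it corresponds
to the map `H¹(−, ℤ/p^m) → H¹(−, ℤ/p^{m'})` coming from `ℤ/p^m ↪ ℤ/p^{m'}`. -/
noncomputable def transQ (m m' : ℕ) (h : m ≤ m') : Qgrp p K m →+ Qgrp p K m' :=
  QuotientAddGroup.map _ _ (Vpow p K (m' - m))
    (by have := Sgrp_le_comap p K m (m' - m)
        rwa [Nat.sub_add_cancel h] at this)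

/-- The Artin–Schreier–Witt model of the `p`-primary part of `H¹_ét(Spec K, ℚ/ℤ)`:
the direct limit `colim_m Q_m`. -/
noncomputable def Hoo : Type _ := AddCommGroup.DirectLimit (Qgrp p K) (transQ p K)

noncomputable instance : AddCommGroup (Hoo p K) :=
  inferInstanceAs (AddCommGroup (AddCommGroup.DirectLimit (Qgrp p K) (transQ p K)))

variable (v : Valuation K (WithZero (Multiplicative ℤ)))

/-- Kato's filtration `fil_n W_m(K)` pulled back to `W(K)`: the condition
`p^i v_K(a_i) ≥ -n` on the first `m` coordinates (where the coordinate of index `j`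
is `a_{m-1-j}`). -/
def filW (m n : ℕ) : Set (WittVector p K) :=
  {x | ∀ j : ℕ, j < m →
    (v (x.coeff j)) ^ (p ^ (m - 1 - j)) ≤
      ((ofAdd (n : ℤ) : Multiplicative ℤ) : WithZero (Multiplicative ℤ))}

/-- `fil_n H¹_ét(K, ℤ/p^m)`: the image of `fil_n W_m(K)` under the
Artin–Schreier–Witt boundary map `∂_m : W_m(K) → H¹_ét(K, ℤ/p^m) = Q_m`. -/
def filQ (m n : ℕ) : Set (Qgrp p K m) :=
  {c | ∃ x ∈ filW p K v m n, (QuotientAddGroup.mk x : Qgrp p K m) = c}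

/-- `fil_n H¹_ét(K, ℚ_p/ℤ_p) = ⋃_m fil_n H¹_ét(K, ℤ/p^m)` inside the direct limit. -/
def filH (n : ℕ) : Set (Hoo p K) :=
  {c | ∃ (m : ℕ) (d : Qgrp p K m), d ∈ filQ p K v m n ∧
    AddCommGroup.DirectLimit.of (Qgrp p K) (transQ p K) m d = c}

/-! Everything rests on two properties of the transition maps `Q_m → Q_M` induced by `V^{M-m}`.

They are injective, with image the `p^m`-torsion of `Q_M`. Indeed `p = V F̄ ≡ V` modulo
`(1 - F̄)W(K)`, and `V s ∈ (1 - F̄)W(K)` forces `s ∈ (1 - F̄)W(K)`: the `0`th coordinate `a` of a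
preimage satisfies `a = a^p`, so `(1 - F̄)[a] = 0`.

They reflect Kato's filtration. If `V u ≡ y` with `y ∈ fil_n W_{M+1}(K)`, then `y₀ = a - a^p`;
as `v(a), v(a^p) ≤ max(1, v(a - a^p))`, subtracting `(1 - F̄)[a] = [a] - [a^p]` from `y` gives
some `V z ∈ fil_n W_{M+1}(K)`, so `u ≡ z` with `z ∈ fil_n W_M(K)`. That `fil_n W_M(K)` is a
subgroup is seen by writing it as the preimage, under `x ↦ [c] F̄^{M-1} x` with `v_K(c) = n`, of
the Witt vectors whose first `M` coordinates are integral. -/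

open WittVector

section WittVectorCoeff

variable {p} {R : Type*} [CommRing R]

lemma exists_verschiebung_eq_of_coeff_zero {x : WittVector p R} (hx : x.coeff 0 = 0) :
    ∃ y, verschiebung y = x :=
  ⟨x.shift 1, by simpa using (eq_iterate_verschiebung (n := 1) fun i hi => by
    rwa [Nat.lt_one_iff.1 hi]).symm⟩

lemma teichmuller_mul_eq_mk_of_invertible [Invertible (p : R)] (c : R) (x : WittVector p R) :
    teichmuller p c * x = mk p fun i => c ^ p ^ i * x.coeff i := by
  apply (ghostMap.bijective_of_invertible p R).1
  ext n
  simp only [map_mul, ghostMap_apply]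
  rw [ghostComponent_teichmuller, ghostComponent_apply, ghostComponent_apply,
    aeval_wittPolynomial, aeval_wittPolynomial, Finset.mul_sum]
  refine Finset.sum_congr rfl fun j hj => ?_
  rw [coeff_mk, mul_pow, ← pow_mul, ← pow_add,
    Nat.add_sub_cancel' (Nat.lt_succ_iff.1 (Finset.mem_range.1 hj))]
  ring

lemma teichmuller_mul_eq_mk_mvPolynomial {σ : Type*} (c : MvPolynomial σ ℤ)
    (x : WittVector p (MvPolynomial σ ℤ)) :
    teichmuller p c * x = mk p fun i => c ^ p ^ i * x.coeff i := by
  have : Invertible (p : MvPolynomial σ ℚ) :=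
    (invertibleOfNonzero (Nat.cast_ne_zero.2 hp.out.ne_zero : (p : ℚ) ≠ 0)).map
      (algebraMap ℚ (MvPolynomial σ ℚ))
  refine map_injective (MvPolynomial.map (Int.castRingHom ℚ))
    (MvPolynomial.map_injective _ Int.cast_injective) ?_
  rw [map_mul, map_teichmuller, teichmuller_mul_eq_mk_of_invertible]
  ext i
  simp [map_coeff]

lemma teichmuller_mul_coeff (c : R) (x : WittVector p R) (i : ℕ) :
    (teichmuller p c * x).coeff i = c ^ p ^ i * x.coeff i := by
  obtain ⟨c, rfl⟩ := MvPolynomial.counit_surjective R c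
  obtain ⟨x, rfl⟩ := map_surjective _ (MvPolynomial.counit_surjective R) x
  rw [← map_teichmuller, ← map_mul, teichmuller_mul_eq_mk_mvPolynomial]
  simp [map_coeff]

variable (p R) in
lemma Vpow_succ_apply (k : ℕ) (x : WittVector p R) :
    Vpow p R (k + 1) x = verschiebung (Vpow p R k x) :=
  rfl

end WittVectorCoeff

lemma AddCommGroup.DirectLimit.exists_map_eq_of_of_eq {ι : Type*} [Preorder ι]
    [IsDirectedOrder ι] [DecidableEq ι] {G : ι → Type*} [∀ i, AddCommGroup (G i)]
    {f : ∀ i j, i ≤ j → G i →+ G j} [DirectedSystem G fun i j h ↦ f i j h] {i j : ι}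
    {a : G i} {b : G j} (h : of G f i a = of G f j b) :
    ∃ k, ∃ (hik : i ≤ k) (hjk : j ≤ k), f i k hik a = f j k hjk b := by
  obtain ⟨l, hil, hjl⟩ := directed_of (· ≤ ·) i j
  have : of G f l (f i l hil a - f j l hjl b) = 0 := by rw [map_sub, of_f, of_f, h, sub_self]
  obtain ⟨k, hlk, hk⟩ := of.zero_exact _ _ this
  refine ⟨k, hil.trans hlk, hjl.trans hlk, ?_⟩
  rwa [map_sub, sub_eq_zero, DirectedSystem.map_map (f := fun i j h ↦ f i j h),
    DirectedSystem.map_map (f := fun i j h ↦ f i j h)] at hk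

section ArtinSchreierWitt

variable {p K}

lemma oneSubF_verschiebung (x : WittVector p K) :
    oneSubF p K (verschiebung x) = verschiebung (oneSubF p K x) :=
  (Vpow_oneSubF p K 1 x).symm

lemma oneSubF_teichmuller (a : K) :
    oneSubF p K (teichmuller p a) = teichmuller p a - teichmuller p (a ^ p) := by
  rw [oneSubF_apply, map_teichmuller, frobenius_def]

lemma oneSubF_coeff_zero (w : WittVector p K) :
    (oneSubF p K w).coeff 0 = w.coeff 0 - w.coeff 0 ^ p := by
  simpa [oneSubF_apply, frobenius_def] using map_sub constantCoeff w (map (frobenius K p) w)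

lemma pow_smul_sub_Vpow_mem_range_oneSubF (j : ℕ) (x : WittVector p K) :
    p ^ j • x - Vpow p K j x ∈ (oneSubF p K).range := by
  induction j with
  | zero => exact ⟨0, by simp [Vpow]⟩
  | succ j ih =>
    obtain ⟨w, hw⟩ := ih
    have hp_smul : p ^ (j + 1) • x = verschiebung (map (frobenius K p) (p ^ j • x)) := by
      rw [pow_succ', mul_smul, ← frobenius_eq_map_frobenius, verschiebung_frobenius, mul_comm,
        nsmul_eq_mul]
    refine ⟨verschiebung w - verschiebung (p ^ j • x), ?_⟩
    rw [map_sub (oneSubF p K), oneSubF_verschiebung, oneSubF_verschiebung, hw, hp_smul,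
      Vpow_succ_apply, oneSubF_apply _ _ (p ^ j • x), map_sub, map_sub]
    abel

lemma mem_range_oneSubF_of_verschiebung_mem {s : WittVector p K}
    (h : verschiebung s ∈ (oneSubF p K).range) : s ∈ (oneSubF p K).range := by
  obtain ⟨w, hw⟩ := h
  have hfix : w.coeff 0 ^ p = w.coeff 0 := by
    have := congrArg (·.coeff 0) hw
    rw [oneSubF_coeff_zero, verschiebung_coeff_zero, sub_eq_zero] at this
    exact this.symm
  obtain ⟨w₁, hw₁⟩ : ∃ w₁, verschiebung w₁ = w - teichmuller p (w.coeff 0) :=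
    exists_verschiebung_eq_of_coeff_zero
      (by simpa using map_sub constantCoeff w (teichmuller p (w.coeff 0)))
  refine ⟨w₁, verschiebung_injective p K ?_⟩
  rw [← oneSubF_verschiebung, hw₁, map_sub, oneSubF_teichmuller, hfix, sub_self, sub_zero, hw]

lemma mem_range_oneSubF_of_Vpow_mem {k : ℕ} {s : WittVector p K}
    (h : Vpow p K k s ∈ (oneSubF p K).range) : s ∈ (oneSubF p K).range := by
  induction k generalizing s with
  | zero => exact h
  | succ k ih => exact ih (mem_range_oneSubF_of_verschiebung_mem h)

lemma mem_Sgrp_iff {m : ℕ} {x : WittVector p K} :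
    x ∈ Sgrp p K m ↔ ∃ w t, oneSubF p K w + Vpow p K m t = x := by
  simp [Sgrp, AddSubgroup.mem_sup]

lemma range_oneSubF_le_Sgrp (m : ℕ) : (oneSubF p K).range ≤ Sgrp p K m := le_sup_left

lemma Vpow_mem_Sgrp (m : ℕ) (t : WittVector p K) : Vpow p K m t ∈ Sgrp p K m :=
  AddSubgroup.mem_sup_right ⟨t, rfl⟩

lemma mem_Sgrp_of_Vpow_mem {k m : ℕ} {x : WittVector p K}
    (h : Vpow p K k x ∈ Sgrp p K (k + m)) : x ∈ Sgrp p K m := by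
  obtain ⟨w, t, hwt⟩ := mem_Sgrp_iff.1 h
  have : x - Vpow p K m t ∈ (oneSubF p K).range :=
    mem_range_oneSubF_of_Vpow_mem ⟨w, by rw [map_sub, Vpow_Vpow, ← hwt, add_sub_cancel_right]⟩
  simpa using add_mem (range_oneSubF_le_Sgrp m this) (Vpow_mem_Sgrp m t)

variable (p K) in
noncomputable def Qgrp.mk (m : ℕ) : WittVector p K →+ Qgrp p K m :=
  QuotientAddGroup.mk' (Sgrp p K m)

lemma Qgrp.mk_surjective (m : ℕ) : Function.Surjective (Qgrp.mk p K m) :=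
  QuotientAddGroup.mk'_surjective _

lemma Qgrp.mk_eq_zero_iff {m : ℕ} {x : WittVector p K} :
    Qgrp.mk p K m x = 0 ↔ x ∈ Sgrp p K m :=
  QuotientAddGroup.eq_zero_iff x

lemma Qgrp.mk_eq_mk_iff {m : ℕ} {x y : WittVector p K} :
    Qgrp.mk p K m x = Qgrp.mk p K m y ↔ x - y ∈ Sgrp p K m :=
  QuotientAddGroup.eq_iff_sub_mem

lemma transQ_mk {m M : ℕ} (h : m ≤ M) (x : WittVector p K) :
    transQ p K m M h (Qgrp.mk p K m x) = Qgrp.mk p K M (Vpow p K (M - m) x) :=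
  rfl

lemma transQ_transQ {i j k : ℕ} (hij : i ≤ j) (hjk : j ≤ k) (q : Qgrp p K i) :
    transQ p K j k hjk (transQ p K i j hij q) = transQ p K i k (hij.trans hjk) q := by
  obtain ⟨x, rfl⟩ := Qgrp.mk_surjective i q
  rw [transQ_mk, transQ_mk, transQ_mk, Vpow_Vpow, show k - j + (j - i) = k - i by omega]

lemma transQ_self {m : ℕ} (q : Qgrp p K m) : transQ p K m m le_rfl q = q := by
  obtain ⟨x, rfl⟩ := Qgrp.mk_surjective m q
  rw [transQ_mk, Nat.sub_self]
  rfl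

instance : DirectedSystem (Qgrp p K) fun i j h => transQ p K i j h where
  map_self _ := transQ_self
  map_map _ _ _ hij hjk q := transQ_transQ hij hjk q

lemma transQ_injective {m M : ℕ} (h : m ≤ M) : Function.Injective (transQ p K m M h) := by
  obtain ⟨k, rfl⟩ := Nat.exists_eq_add_of_le' h
  refine (injective_iff_map_eq_zero _).2 fun q hq => ?_
  obtain ⟨x, rfl⟩ := Qgrp.mk_surjective m q
  rw [transQ_mk, Nat.add_sub_cancel, Qgrp.mk_eq_zero_iff] at hq
  exact Qgrp.mk_eq_zero_iff.2 (mem_Sgrp_of_Vpow_mem hq)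

lemma pow_smul_eq_zero {m : ℕ} (q : Qgrp p K m) : p ^ m • q = 0 := by
  obtain ⟨x, rfl⟩ := Qgrp.mk_surjective m q
  rw [← map_nsmul, Qgrp.mk_eq_zero_iff]
  simpa using add_mem (range_oneSubF_le_Sgrp m (pow_smul_sub_Vpow_mem_range_oneSubF m x))
    (Vpow_mem_Sgrp m x)

lemma exists_transQ_eq_of_pow_smul_eq_zero {m M : ℕ} (h : m ≤ M) {q : Qgrp p K M}
    (hq : p ^ m • q = 0) : ∃ d, transQ p K m M h d = q := by
  obtain ⟨k, rfl⟩ := Nat.exists_eq_add_of_le h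
  obtain ⟨y, rfl⟩ := Qgrp.mk_surjective _ q
  rw [← map_nsmul, Qgrp.mk_eq_zero_iff] at hq
  have hV : Vpow p K m y ∈ Sgrp p K (m + k) := by
    simpa using sub_mem hq (range_oneSubF_le_Sgrp _ (pow_smul_sub_Vpow_mem_range_oneSubF m y))
  obtain ⟨w, t, hwt⟩ := mem_Sgrp_iff.1 hV
  have : y - Vpow p K k t ∈ (oneSubF p K).range :=
    mem_range_oneSubF_of_Vpow_mem ⟨w, by rw [map_sub, Vpow_Vpow, ← hwt, add_sub_cancel_right]⟩
  refine ⟨Qgrp.mk p K m t, ?_⟩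
  rw [transQ_mk, Nat.add_sub_cancel_left]
  exact (Qgrp.mk_eq_mk_iff.2 (range_oneSubF_le_Sgrp _ this)).symm

end ArtinSchreierWitt

open scoped WithZero

section Filtration

variable {p} {R : Type*} [CommRing R] (v : Valuation R ℤᵐ⁰) {n : ℕ}

lemma valuation_pow_le_of_valuation_sub_pow_le {a : R} {e : ℕ} {γ : ℤᵐ⁰} (hγ : 1 ≤ γ)
    (h : v (a - a ^ p) ^ e ≤ γ) : v a ^ e ≤ γ ∧ v (a ^ p) ^ e ≤ γ := by
  rcases le_or_gt (v a) 1 with ha | ha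
  · have hap : v (a ^ p) ≤ 1 := by rw [map_pow]; exact pow_le_one₀ zero_le ha
    exact ⟨(pow_le_one₀ zero_le ha).trans hγ, (pow_le_one₀ zero_le hap).trans hγ⟩
  · have hlt : v a < v (a ^ p) := by rw [map_pow]; exact lt_self_pow₀ ha hp.out.one_lt
    rw [Valuation.map_sub_eq_of_lt_right _ hlt] at h
    exact ⟨(pow_le_pow_left₀ zero_le hlt.le e).trans h, h⟩

lemma teichmuller_mem_filW {M : ℕ} {a : R} (ha : v a ^ p ^ (M - 1) ≤ WithZero.exp (n : ℤ)) :
    teichmuller p a ∈ filW p R v M n := by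
  rintro (_ | j) _
  · rw [teichmuller_coeff_zero, Nat.sub_zero]
    exact ha
  · simp [hp.out.ne_zero]

lemma verschiebung_mem_filW_iff {M : ℕ} {x : WittVector p R} :
    verschiebung x ∈ filW p R v (M + 1) n ↔ x ∈ filW p R v M n := by
  refine ⟨fun h j hj => ?_, fun h => ?_⟩
  · have := h (j + 1) (by omega)
    rwa [verschiebung_coeff_succ, show M + 1 - 1 - (j + 1) = M - 1 - j by omega] at this
  · rintro (_ | j) hj
    · simp [hp.out.ne_zero]
    · rw [verschiebung_coeff_succ, show M + 1 - 1 - (j + 1) = M - 1 - j by omega]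
      exact h j (by omega)

lemma Vpow_mem_filW {m : ℕ} (k : ℕ) {x : WittVector p R} (hx : x ∈ filW p R v m n) :
    Vpow p R k x ∈ filW p R v (m + k) n := by
  induction k with
  | zero => exact hx
  | succ k ih => exact (verschiebung_mem_filW_iff v).2 ih

noncomputable def truncIntegralSubring (M : ℕ) : Subring (WittVector p R) :=
  ((truncate M).comp (map v.integer.subtype)).range.comap (truncate M)

lemma mem_truncIntegralSubring_iff {M : ℕ} {y : WittVector p R} :
    y ∈ truncIntegralSubring v M ↔ ∀ j < M, v (y.coeff j) ≤ 1 := by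
  refine ⟨fun ⟨z, hz⟩ j hj => ?_, fun h => ?_⟩
  · have := congrArg (·.coeff ⟨j, hj⟩) hz
    simp only [RingHom.comp_apply, coeff_truncate, map_coeff] at this
    exact this ▸ (z.coeff j).2
  · classical
    refine ⟨mk p fun j => if hj : v (y.coeff j) ≤ 1 then ⟨y.coeff j, hj⟩ else 0, ?_⟩
    ext j
    simp [coeff_truncate, map_coeff, h j j.2]

end Filtration

section FiltrationQuotient

variable {p K} {n : ℕ}

noncomputable def filWAddSubgroup (M : ℕ) (c : K) : AddSubgroup (WittVector p K) :=
  (truncIntegralSubring v M).toAddSubgroup.comap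
    ((AddMonoidHom.mulLeft (teichmuller p c)).comp
      (map (iterateFrobenius K p (M - 1))).toAddMonoidHom)

lemma coe_filWAddSubgroup {c : K} (hc : v c = WithZero.exp (-n : ℤ)) (M : ℕ) :
    (filWAddSubgroup v M c : Set (WittVector p K)) = filW p K v M n := by
  ext x
  simp only [SetLike.mem_coe, filWAddSubgroup, AddSubgroup.mem_comap, Subring.mem_toAddSubgroup,
    mem_truncIntegralSubring_iff, AddMonoidHom.comp_apply, AddMonoidHom.coe_mulLeft,
    RingHom.toAddMonoidHom_eq_coe, AddMonoidHom.coe_coe, teichmuller_mul_coeff, map_coeff,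
    iterateFrobenius_def]
  refine forall₂_congr fun j hj => ?_
  rw [map_mul, map_pow, map_pow, hc, show p ^ (M - 1) = p ^ (M - 1 - j) * p ^ j by
    rw [← pow_add]; congr 1; omega, pow_mul, ← mul_pow,
    pow_le_one_iff_of_nonneg zero_le (pow_ne_zero _ hp.out.ne_zero), WithZero.exp_neg,
    inv_mul_le_iff₀ WithZero.exp_pos, mul_one]
  rfl

lemma mem_filQ_iff {m : ℕ} {q : Qgrp p K m} :
    q ∈ filQ p K v m n ↔ ∃ x ∈ filW p K v m n, Qgrp.mk p K m x = q :=
  Iff.rfl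

lemma transQ_mem_filQ {m M : ℕ} (h : m ≤ M) {q : Qgrp p K m} (hq : q ∈ filQ p K v m n) :
    transQ p K m M h q ∈ filQ p K v M n := by
  obtain ⟨k, rfl⟩ := Nat.exists_eq_add_of_le h
  obtain ⟨x, hx, rfl⟩ := (mem_filQ_iff v).1 hq
  exact (mem_filQ_iff v).2 ⟨_, Vpow_mem_filW v k hx, by rw [transQ_mk, Nat.add_sub_cancel_left]⟩

lemma sub_oneSubF_teichmuller_mem_filW {c : K} (hc : v c = WithZero.exp (-n : ℤ)) {M : ℕ}
    {y : WittVector p K} {a : K} (hy : y ∈ filW p K v (M + 1) n) (hy₀ : y.coeff 0 = a - a ^ p) :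
    y - oneSubF p K (teichmuller p a) ∈ filW p K v (M + 1) n := by
  have ha : v a ^ p ^ M ≤ WithZero.exp (n : ℤ) ∧
      v (a ^ p) ^ p ^ M ≤ WithZero.exp (n : ℤ) := by
    refine valuation_pow_le_of_valuation_sub_pow_le v
      (WithZero.exp_le_exp.2 (Nat.cast_nonneg n)) ?_
    have := hy 0 M.succ_pos
    rwa [hy₀, Nat.add_sub_cancel, Nat.sub_zero] at this
  rw [← coe_filWAddSubgroup v hc, SetLike.mem_coe] at hy ⊢
  rw [oneSubF_teichmuller]
  refine sub_mem hy (sub_mem ?_ ?_) <;> rw [← SetLike.mem_coe, coe_filWAddSubgroup v hc] <;>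
    refine teichmuller_mem_filW v ?_ <;> rw [Nat.add_sub_cancel]
  exacts [ha.1, ha.2]

lemma mem_filQ_of_transQ_succ_mem {c : K} (hc : v c = WithZero.exp (-n : ℤ)) {M : ℕ}
    {q : Qgrp p K M} (hq : transQ p K M (M + 1) (Nat.le_add_right M 1) q ∈ filQ p K v (M + 1) n) :
    q ∈ filQ p K v M n := by
  obtain ⟨u, rfl⟩ := Qgrp.mk_surjective M q
  obtain ⟨y, hy, hyu⟩ := (mem_filQ_iff v).1 hq
  rw [transQ_mk, Nat.add_sub_cancel_left, Qgrp.mk_eq_mk_iff] at hyu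
  change y - verschiebung u ∈ _ at hyu
  obtain ⟨w, t, hwt⟩ := mem_Sgrp_iff.1 hyu
  set a := w.coeff 0
  have hy₀ : y.coeff 0 = a - a ^ p := by
    have h₀ := congrArg constantCoeff hwt
    simp only [map_add, map_sub, constantCoeff_apply, oneSubF_coeff_zero, Vpow_succ_apply,
      verschiebung_coeff_zero, add_zero, sub_zero] at h₀
    exact h₀.symm
  have hz := sub_oneSubF_teichmuller_mem_filW v hc hy hy₀
  obtain ⟨z, hz'⟩ := exists_verschiebung_eq_of_coeff_zero (p := p) (by
    simpa [hy₀, oneSubF_coeff_zero] using map_sub constantCoeff y (oneSubF p K (teichmuller p a)))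
  refine (mem_filQ_iff v).2
    ⟨z, (verschiebung_mem_filW_iff v).1 (hz' ▸ hz), transQ_injective (Nat.le_add_right M 1) ?_⟩
  rw [transQ_mk, transQ_mk, Nat.add_sub_cancel_left, Qgrp.mk_eq_mk_iff]
  change verschiebung z - verschiebung u ∈ _
  rw [hz', sub_right_comm]
  exact sub_mem hyu (range_oneSubF_le_Sgrp _ ⟨_, rfl⟩)

lemma mem_filQ_of_transQ_mem {c : K} (hc : v c = WithZero.exp (-n : ℤ)) {m M : ℕ} (h : m ≤ M)
    {q : Qgrp p K m} (hq : transQ p K m M h q ∈ filQ p K v M n) : q ∈ filQ p K v m n := by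
  induction M, h using Nat.le_induction with
  | base => rwa [transQ_self] at hq
  | succ M hmM ih =>
    exact ih (mem_filQ_of_transQ_succ_mem v hc (by rwa [transQ_transQ]))

lemma of_mem_filH_iff {c : K} (hc : v c = WithZero.exp (-n : ℤ)) {m : ℕ} {q : Qgrp p K m} :
    AddCommGroup.DirectLimit.of (Qgrp p K) (transQ p K) m q ∈ filH p K v n ↔
      q ∈ filQ p K v m n := by
  refine ⟨fun ⟨m₁, d, hd, hdq⟩ => ?_, fun hq => ⟨m, q, hq, rfl⟩⟩
  obtain ⟨M, h₁, h, hM⟩ := AddCommGroup.DirectLimit.exists_map_eq_of_of_eq hdq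
  exact mem_filQ_of_transQ_mem v hc h (hM ▸ transQ_mem_filQ v h₁ hd)

end FiltrationQuotient

theorem statement_5_general (p : ℕ) [hp : Fact p.Prime] (K : Type*) [Field K] [CharP K p]
    (v : Valuation K (WithZero (Multiplicative ℤ)))
    -- the valuation is normalized (in particular discrete):
    (hv : ∀ d : ℤ, ∃ x : K, v x = ((ofAdd d : Multiplicative ℤ) : WithZero (Multiplicative ℤ)))
    (m : ℕ) (n : ℕ) :
    (∀ c : Qgrp p K m,
        AddCommGroup.DirectLimit.of (Qgrp p K) (transQ p K) m c ∈ filH p K v n ↔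
          c ∈ filQ p K v m n) ∧
    (∀ c : Hoo p K,
        (c ∈ filH p K v n ∧ p ^ m • c = 0) ↔
          ∃ d ∈ filQ p K v m n,
            AddCommGroup.DirectLimit.of (Qgrp p K) (transQ p K) m d = c) := by
  obtain ⟨c₀, hc₀⟩ := hv (-n)
  refine ⟨fun c => of_mem_filH_iff v hc₀, fun c => ⟨?_, ?_⟩⟩
  · rintro ⟨⟨m₁, d₁, hd₁, rfl⟩, hc⟩
    obtain ⟨M, h₁, h, hM⟩ := AddCommGroup.DirectLimit.exists_map_eq_of_of_eq
      (((map_nsmul _ _ _).trans hc).trans (map_zero (AddCommGroup.DirectLimit.of _ _ m)).symm)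
    rw [map_zero, map_nsmul] at hM
    obtain ⟨d, hd⟩ := exists_transQ_eq_of_pow_smul_eq_zero h hM
    refine ⟨d, mem_filQ_of_transQ_mem v hc₀ h (hd ▸ transQ_mem_filQ v h₁ hd₁), ?_⟩
    rw [← AddCommGroup.DirectLimit.of_f h, hd, AddCommGroup.DirectLimit.of_f]
  · rintro ⟨d, hd, rfl⟩
    exact ⟨⟨m, d, hd, rfl⟩, (map_nsmul _ _ _).symm.trans
      ((congrArg _ (pow_smul_eq_zero d)).trans (map_zero _))⟩

/-- Let `K` be a Henselian discrete valuation field of characteristic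
`p > 0`.  Then for every `m ≥ 1` and `n ≥ 0`:
(1) `fil_n H¹_ét(K, ℤ/p^m) = H¹_ét(K, ℤ/p^m) ∩ fil_n H¹_ét(K, ℚ_p/ℤ_p)`: an element of
    `H¹_ét(K, ℤ/p^m)` lies in `fil_n H¹_ét(K, ℚ_p/ℤ_p)` iff it lies in
    `fil_n H¹_ét(K, ℤ/p^m)`;
(2) `fil_n H¹_ét(K, ℤ/p^m) = {p^m}`-torsion of `fil_n H¹_ét(K, ℚ_p/ℤ_p)`: an element of
    `H¹_ét(K, ℚ_p/ℤ_p)` is killed by `p^m` and lies in `fil_n` iff it is the image of an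
    element of `fil_n H¹_ét(K, ℤ/p^m)`. -/
theorem statement_5 (p : ℕ) [hp : Fact p.Prime] (K : Type*) [Field K] [CharP K p]
    (v : Valuation K (WithZero (Multiplicative ℤ)))
    -- the valuation is normalized (in particular discrete):
    (hv : ∀ d : ℤ, ∃ x : K, v x = ((ofAdd d : Multiplicative ℤ) : WithZero (Multiplicative ℤ)))
    -- the valuation ring of `K` is Henselian:
    [hhens : HenselianLocalRing v.integer]
    (m : ℕ) (hm : 1 ≤ m) (n : ℕ) :
    (∀ c : Qgrp p K m,
        AddCommGroup.DirectLimit.of (Qgrp p K) (transQ p K) m c ∈ filH p K v n ↔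
          c ∈ filQ p K v m n) ∧
    (∀ c : Hoo p K,
        (c ∈ filH p K v n ∧ p ^ m • c = 0) ↔
          ∃ d ∈ filQ p K v m n,
            AddCommGroup.DirectLimit.of (Qgrp p K) (transQ p K) m d = c) :=
  statement_5_general p (hp := hp) K v hv m n
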